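/- Let ⟨ℛ, Q, C⟩ be an admissible triple and P a SQCLP(ℛ,Q,C)-program. Then the interpretation transformer T_P is continuous: for every nonempty ⊆-directed family {I_a}_{a ∈ A} of qc-interpretations, T_P(⋃_{a ∈ A} I_a) = ⋃_{a ∈ A} T_P(I_a); in particular, for every increasing chain I₀ ⊆ I₁ ⊆ I₂ ⊆ ⋯ of qc-interpretations, T_P(⋃_{k ∈ ℕ} I_k) = ⋃_{k ∈ ℕ} T_P(I_k). -/
import Mathlib


open scoped BigOperators

/-- A qualification domain: a bounded lattice equipped with an attenuation operation. -/
structure QualificationDomain (D : Type*) [Lattice D] [BoundedOrder D] where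
  att : D → D → D
  att_assoc : ∀ d e f : D, att (att d e) f = att d (att e f)
  att_comm : ∀ d e : D, att d e = att e d
  att_mono : ∀ d d' e e' : D, d ≤ d' → e ≤ e' → att d e ≤ att d' e'
  att_top : ∀ d : D, att d ⊤ = d
  att_bot : ∀ d : D, att d ⊥ = ⊥
  att_le : ∀ d e : D, att d e ≤ e
  att_ne_bot : ∀ d e : D, d ≠ ⊥ → e ≠ ⊥ → att d e ≠ ⊥
  att_inf : ∀ d e₁ e₂ : D, att d (e₁ ⊓ e₂) = att d e₁ ⊓ att d e₂

/-- First-order terms over variables `V` and data constructors `CS`. -/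
inductive Trm (V : Type*) (CS : Type*) : Type _
  | var : V → Trm V CS
  | app : CS → List (Trm V CS) → Trm V CS

variable {V CS DP PP : Type*}

/-- Application of a substitution to a term. -/
def Trm.subst (θ : V → Trm V CS) : Trm V CS → Trm V CS
  | .var X => θ X
  | .app c ts => .app c (ts.attach.map fun t => t.1.subst θ)
decreasing_by
  have := List.sizeOf_lt_of_mem t.2
  simp only [Trm.app.sizeOf_spec]
  omega

/-- Application of a valuation (ground substitution) to a term; ground terms are
terms over the empty set of variables. -/
def Trm.applyVal (η : V → Trm Empty CS) : Trm V CS → Trm Empty CS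
  | .var X => η X
  | .app c ts => .app c (ts.attach.map fun t => t.1.applyVal η)
decreasing_by
  have := List.sizeOf_lt_of_mem t.2
  simp only [Trm.app.sizeOf_spec]
  omega

variable {D : Type*} [Lattice D] [BoundedOrder D]

/-- The extension of a proximity relation on symbols to a proximity relation on terms:
`ext R (var X) (var X) = ⊤`, `ext R t s = ⊥` if exactly one of `t`, `s` is a variable or
they are applications of different arities, and
`ext R (c(t₁,…,tₙ)) (c'(s₁,…,sₙ)) = R c c' ⊓ ext R t₁ s₁ ⊓ ⋯ ⊓ ext R tₙ sₙ`. -/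
def Trm.ext [DecidableEq V] (R : CS → CS → D) : Trm V CS → Trm V CS → D
  | .var X, .var Y => if X = Y then (⊤ : D) else ⊥
  | .var _, .app _ _ => ⊥
  | .app _ _, .var _ => ⊥
  | .app c ts, .app c' ss =>
      if ts.length = ss.length then
        R c c' ⊓ ((ts.zip ss).attach.map (fun p => Trm.ext R p.1.1 p.1.2)).foldr (· ⊓ ·) ⊤
      else ⊥
termination_by t _ => sizeOf t
decreasing_by
  have h1 : p.1.1 ∈ ts := (List.of_mem_zip p.2).1
  have := List.sizeOf_lt_of_mem h1
  simp only [Trm.app.sizeOf_spec]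
  omega

/-- Constraints over terms: primitive atoms, equations, conjunction and
existential quantification. -/
inductive Constr (V CS PP : Type*) : Type _
  | prim : PP → List (Trm V CS) → Constr V CS PP
  | eq : Trm V CS → Trm V CS → Constr V CS PP
  | and : Constr V CS PP → Constr V CS PP → Constr V CS PP
  | ex : V → Constr V CS PP → Constr V CS PP

/-- Satisfaction of a constraint by a valuation, relative to an interpretation `pI` of the
primitive predicates over ground terms.  An equation is true iff both sides evaluate to the
same ground term. -/
def Constr.sat [DecidableEq V] (pI : PP → List (Trm Empty CS) → Prop)
    (η : V → Trm Empty CS) : Constr V CS PP → Prop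
  | .prim p ts => pI p (ts.map (Trm.applyVal η))
  | .eq t s => t.applyVal η = s.applyVal η
  | .and c₁ c₂ => c₁.sat pI η ∧ c₂.sat pI η
  | .ex X c => ∃ u : Trm Empty CS, c.sat pI (Function.update η X u)

/-- The set of solutions of a set of constraints. -/
def Sol [DecidableEq V] (pI : PP → List (Trm Empty CS) → Prop)
    (Pi : Set (Constr V CS PP)) : Set (V → Trm Empty CS) :=
  {η | ∀ c ∈ Pi, c.sat pI η}

/-- Entailment `Π ⊨_C π` of a constraint by a set of constraints. -/
def Entails [DecidableEq V] (pI : PP → List (Trm Empty CS) → Prop)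
    (Pi : Set (Constr V CS PP)) (c : Constr V CS PP) : Prop :=
  ∀ η ∈ Sol pI Pi, c.sat pI η

/-- Semantic form of the entailment `Π' ⊨_C Πθ`: every solution of `Π'`, composed with the
substitution `θ`, is a solution of `Π`. -/
def EntailsSubst [DecidableEq V] (pI : PP → List (Trm Empty CS) → Prop)
    (Pi' : Set (Constr V CS PP)) (θ : V → Trm V CS) (Pi : Set (Constr V CS PP)) : Prop :=
  ∀ η ∈ Sol pI Pi', (fun X => (θ X).applyVal η) ∈ Sol pI Pi

/-- Constraint-based term proximity: `t ≈_{d,Π} s` iff there are terms `t̂`, `ŝ` with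
`Π ⊨_C t == t̂`, `Π ⊨_C s == ŝ` and `ext R t̂ ŝ ⊒ d`. -/
def TermClose [DecidableEq V] (R : CS → CS → D) (pI : PP → List (Trm Empty CS) → Prop)
    (d : D) (Pi : Set (Constr V CS PP)) (t s : Trm V CS) : Prop :=
  ∃ th sh : Trm V CS,
    Entails pI Pi (Constr.eq t th) ∧ Entails pI Pi (Constr.eq s sh) ∧ d ≤ Trm.ext R th sh

/-- Atoms: defined atoms, primitive atoms and equations. -/
inductive Atom (V CS DP PP : Type*) : Type _
  | defd : DP → List (Trm V CS) → Atom V CS DP PP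
  | prim : PP → List (Trm V CS) → Atom V CS DP PP
  | eq : Trm V CS → Trm V CS → Atom V CS DP PP

/-- Application of a substitution to an atom. -/
def Atom.subst (θ : V → Trm V CS) : Atom V CS DP PP → Atom V CS DP PP
  | .defd r ts => .defd r (ts.map (Trm.subst θ))
  | .prim p ts => .prim p (ts.map (Trm.subst θ))
  | .eq t s => .eq (t.subst θ) (s.subst θ)

/-- A defined atom. -/
def Atom.IsDefined : Atom V CS DP PP → Prop
  | .defd _ _ => True
  | .prim _ _ => False
  | .eq _ _ => False

/-- A qualified constrained atom (qc-atom) `A#d ⇐ Π`. -/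
structure QCAtom (V CS DP PP D : Type*) where
  atom : Atom V CS DP PP
  deg : D
  cons : Set (Constr V CS PP)

/-- A qc-atom is observable iff its qualification value is not `⊥` and its constraint
set is satisfiable. -/
def Observable [DecidableEq V] (pI : PP → List (Trm Empty CS) → Prop)
    (φ : QCAtom V CS DP PP D) : Prop :=
  φ.deg ≠ ⊥ ∧ (Sol pI φ.cons).Nonempty

/-- The entailment relation `φ ⊨_{Q,C} φ'` between qc-atoms: there is a substitution `θ`
with `A' = Aθ`, `d' ⊑ d` and `Π' ⊨_C Πθ`. -/
def QCEntails [DecidableEq V] (pI : PP → List (Trm Empty CS) → Prop)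
    (φ φ' : QCAtom V CS DP PP D) : Prop :=
  ∃ θ : V → Trm V CS,
    φ'.atom = φ.atom.subst θ ∧ φ'.deg ≤ φ.deg ∧ EntailsSubst pI φ'.cons θ φ.cons

/-- A qc-interpretation: a set of defined observable qc-atoms closed under `⊨_{Q,C}`. -/
def IsInterp [DecidableEq V] (pI : PP → List (Trm Empty CS) → Prop)
    (I : Set (QCAtom V CS DP PP D)) : Prop :=
  (∀ φ ∈ I, φ.atom.IsDefined ∧ Observable pI φ) ∧
  (∀ φ ∈ I, ∀ φ' : QCAtom V CS DP PP D,
    QCEntails pI φ φ' → Observable pI φ' → φ' ∈ I)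

/-- Validity of an observable qc-atom in a qc-interpretation. -/
def Valid [DecidableEq V] (R : CS → CS → D) (pI : PP → List (Trm Empty CS) → Prop)
    (I : Set (QCAtom V CS DP PP D)) (φ : QCAtom V CS DP PP D) : Prop :=
  match φ.atom with
  | .defd _ _ => φ ∈ I
  | .prim p ts => Entails pI φ.cons (Constr.prim p ts)
  | .eq t s => TermClose R pI φ.deg φ.cons t s

/-- A `Q`-valued proximity relation on the symbols (variables, data constructors, defined
predicates, primitive predicates): it is determined by its restrictions to data constructors
and to defined predicate symbols, since it behaves as the identity on variables and is `⊥`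
between symbols of different kinds (and on primitive predicates it is only nonbottom between
equal symbols). -/
structure ProximityRel (D : Type*) [Lattice D] [BoundedOrder D] {CS DP : Type*}
    (arC : CS → ℕ) (arD : DP → ℕ) where
  dc : CS → CS → D
  dp : DP → DP → D
  dc_refl : ∀ c, dc c c = ⊤
  dc_symm : ∀ c c', dc c c' = dc c' c
  dc_arity : ∀ c c', dc c c' ≠ ⊥ → arC c = arC c'
  dp_refl : ∀ r, dp r r = ⊤
  dp_symm : ∀ r r', dp r r' = dp r' r
  dp_arity : ∀ r r', dp r r' ≠ ⊥ → arD r = arD r'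

/-- A program clause `p(t₁,…,tₙ) ←α– B₁#w₁, …, Bₘ#wₘ`; a threshold `wⱼ` is either `some w`
with `w ∈ D` or `none` (standing for `?`). -/
structure Clause (V CS DP PP D : Type*) where
  headPred : DP
  headArgs : List (Trm V CS)
  att : D
  body : List (Atom V CS DP PP × Option D)

/-- Well-formedness of a clause: the attenuation factor and all thresholds are `≠ ⊥`. -/
def ClauseWF (C : Clause V CS DP PP D) : Prop :=
  C.att ≠ ⊥ ∧ ∀ bw ∈ C.body, ∀ w, bw.2 = some w → w ≠ (⊥ : D)

/-- A SQCLP program: a set of well-formed clauses. -/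
def ProgWF (P : Set (Clause V CS DP PP D)) : Prop := ∀ C ∈ P, ClauseWF C

/-- `e ⊒? w`: trivially true for `w = ?`, and `w ⊑ e` otherwise. -/
def MeetsThreshold (e : D) : Option D → Prop
  | none => True
  | some w => w ≤ e

/-- The observable defined qc-atom `φ : p'(t'₁,…,t'ₙ)#d ⇐ Π` is an immediate consequence of
the qc-interpretation `I` via the clause `C`. -/
def ImmCons [DecidableEq V] (Q : QualificationDomain D) {arC : CS → ℕ} {arD : DP → ℕ}
    (Rl : ProximityRel D arC arD) (pI : PP → List (Trm Empty CS) → Prop)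
    (I : Set (QCAtom V CS DP PP D)) (C : Clause V CS DP PP D)
    (φ : QCAtom V CS DP PP D) : Prop :=
  ∃ (p' : DP) (ts' : List (Trm V CS)),
    φ.atom = Atom.defd p' ts' ∧ Observable pI φ ∧
    ∃ (θ : V → Trm V CS) (hn : C.headArgs.length = ts'.length)
      (ds : Fin ts'.length → D) (es : Fin C.body.length → D),
      Rl.dp p' C.headPred ≠ ⊥ ∧
      (∀ i, ds i ≠ ⊥) ∧ (∀ j, es j ≠ ⊥) ∧
      (∀ i : Fin ts'.length,
        TermClose Rl.dc pI (ds i) φ.cons (ts'.get i)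
          ((C.headArgs.get (Fin.cast hn.symm i)).subst θ)) ∧
      (∀ j : Fin C.body.length,
        Valid Rl.dc pI I ⟨((C.body.get j).1.subst θ), es j, φ.cons⟩) ∧
      (∀ j : Fin C.body.length, MeetsThreshold (es j) (C.body.get j).2) ∧
      φ.deg ≤ (Rl.dp p' C.headPred ⊓ Finset.univ.inf ds) ⊓ Q.att C.att (Finset.univ.inf es)

/-- The interpretation transformer `T_P`. -/
def Tp [DecidableEq V] (Q : QualificationDomain D) {arC : CS → ℕ} {arD : DP → ℕ}
    (Rl : ProximityRel D arC arD) (pI : PP → List (Trm Empty CS) → Prop)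
    (P : Set (Clause V CS DP PP D)) (I : Set (QCAtom V CS DP PP D)) :
    Set (QCAtom V CS DP PP D) :=
  {φ | ∃ C ∈ P, ImmCons Q Rl pI I C φ}

/-- `I` is a model of the clause `C`. -/
def ModelsClause [DecidableEq V] (Q : QualificationDomain D) {arC : CS → ℕ} {arD : DP → ℕ}
    (Rl : ProximityRel D arC arD) (pI : PP → List (Trm Empty CS) → Prop)
    (I : Set (QCAtom V CS DP PP D)) (C : Clause V CS DP PP D) : Prop :=
  ∀ φ, ImmCons Q Rl pI I C φ → φ ∈ I

/-- `I ⊨_{ℛ,Q,C} P` : `I` is a model of the program `P`. -/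
def ModelsProg [DecidableEq V] (Q : QualificationDomain D) {arC : CS → ℕ} {arD : DP → ℕ}
    (Rl : ProximityRel D arC arD) (pI : PP → List (Trm Empty CS) → Prop)
    (I : Set (QCAtom V CS DP PP D)) (P : Set (Clause V CS DP PP D)) : Prop :=
  ∀ C ∈ P, ModelsClause Q Rl pI I C

/-- Derivability `P ⊢_{ℛ,Q,C} φ` in the Proximity-based Qualified Constrained Horn Logic
SQCHL(ℛ,Q,C), with inference rules SQDA, SQEA and SQPA. -/
inductive Deriv [DecidableEq V] (Q : QualificationDomain D) {arC : CS → ℕ} {arD : DP → ℕ}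
    (Rl : ProximityRel D arC arD) (pI : PP → List (Trm Empty CS) → Prop)
    (P : Set (Clause V CS DP PP D)) : QCAtom V CS DP PP D → Prop
  | sqea : ∀ (d : D) (Pi : Set (Constr V CS PP)) (t s : Trm V CS),
      d ≠ ⊥ → TermClose Rl.dc pI d Pi t s → Deriv Q Rl pI P ⟨Atom.eq t s, d, Pi⟩
  | sqpa : ∀ (d : D) (Pi : Set (Constr V CS PP)) (p : PP) (ts : List (Trm V CS)),
      d ≠ ⊥ → Entails pI Pi (Constr.prim p ts) → Deriv Q Rl pI P ⟨Atom.prim p ts, d, Pi⟩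
  | sqda : ∀ (C : Clause V CS DP PP D), C ∈ P →
      ∀ (θ : V → Trm V CS) (p' : DP) (ts' : List (Trm V CS)) (d : D)
        (Pi : Set (Constr V CS PP)) (hn : C.headArgs.length = ts'.length)
        (ds : Fin ts'.length → D) (es : Fin C.body.length → D),
      Rl.dp p' C.headPred ≠ ⊥ →
      (∀ i, ds i ≠ ⊥) → (∀ j, es j ≠ ⊥) →
      (∀ i : Fin ts'.length,
        Deriv Q Rl pI P
          ⟨Atom.eq (ts'.get i) ((C.headArgs.get (Fin.cast hn.symm i)).subst θ), ds i, Pi⟩) →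
      (∀ j : Fin C.body.length,
        Deriv Q Rl pI P ⟨((C.body.get j).1.subst θ), es j, Pi⟩) →
      (∀ j : Fin C.body.length, MeetsThreshold (es j) (C.body.get j).2) →
      d ≤ (Rl.dp p' C.headPred ⊓ Finset.univ.inf ds) ⊓ Q.att C.att (Finset.univ.inf es) →
      Deriv Q Rl pI P ⟨Atom.defd p' ts', d, Pi⟩


section Aux

variable {V CS DP PP D : Type*} [DecidableEq V] [Lattice D] [BoundedOrder D]
variable {arC : CS → ℕ} {arD : DP → ℕ}

lemma Valid.mono (R : CS → CS → D) (pI : PP → List (Trm Empty CS) → Prop)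
    {I J : Set (QCAtom V CS DP PP D)} (h : I ⊆ J) (φ : QCAtom V CS DP PP D)
    (hv : Valid R pI I φ) : Valid R pI J φ := by
  unfold Valid at *
  cases hA : φ.atom <;> simp only [hA] at hv ⊢
  · exact h hv
  · exact hv
  · exact hv

lemma Valid.of_iUnion {ι : Type} [Nonempty ι]
    (R : CS → CS → D) (pI : PP → List (Trm Empty CS) → Prop)
    (F : ι → Set (QCAtom V CS DP PP D)) (φ : QCAtom V CS DP PP D)
    (hv : Valid R pI (⋃ a, F a) φ) : ∃ a, Valid R pI (F a) φ := by
  unfold Valid at *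
  cases hA : φ.atom <;> simp only [hA] at hv ⊢
  · simpa using hv
  · exact ⟨Classical.arbitrary ι, hv⟩
  · exact ⟨Classical.arbitrary ι, hv⟩

lemma ImmCons.mono (Q : QualificationDomain D) (Rl : ProximityRel D arC arD)
    (pI : PP → List (Trm Empty CS) → Prop)
    {I J : Set (QCAtom V CS DP PP D)} (h : I ⊆ J) (C : Clause V CS DP PP D)
    (φ : QCAtom V CS DP PP D) (hic : ImmCons Q Rl pI I C φ) :
    ImmCons Q Rl pI J C φ := by
  obtain ⟨p', ts', h1, h2, θ, hn, ds, es, h3, h4, h5, h6, h7, h8, h9⟩ := hic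
  exact ⟨p', ts', h1, h2, θ, hn, ds, es, h3, h4, h5, h6,
    fun j => Valid.mono _ _ h _ (h7 j), h8, h9⟩

end Aux

section Theorems

variable {V CS DP PP D : Type*} [DecidableEq V] [Lattice D] [BoundedOrder D]
variable {arC : CS → ℕ} {arD : DP → ℕ}

/-- The interpretation transformer `T_P` is continuous: it commutes with
unions of nonempty directed families of qc-interpretations; in particular it commutes with
unions of increasing chains of qc-interpretations. -/
theorem Tp_continuous
    (Q : QualificationDomain D) (Rl : ProximityRel D arC arD)
    (pI : PP → List (Trm Empty CS) → Prop)
    (P : Set (Clause V CS DP PP D)) (hP : ProgWF P) :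
    (∀ (ι : Type) [Nonempty ι] (F : ι → Set (QCAtom V CS DP PP D)),
      (∀ a, IsInterp pI (F a)) → Directed (· ⊆ ·) F →
      Tp Q Rl pI P (⋃ a, F a) = ⋃ a, Tp Q Rl pI P (F a)) ∧
    (∀ F : ℕ → Set (QCAtom V CS DP PP D),
      (∀ k, IsInterp pI (F k)) → Monotone F →
      Tp Q Rl pI P (⋃ k, F k) = ⋃ k, Tp Q Rl pI P (F k)) := by
  have key : ∀ (ι : Type) [Nonempty ι] (F : ι → Set (QCAtom V CS DP PP D)),
      (∀ a, IsInterp pI (F a)) → Directed (· ⊆ ·) F →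
      Tp Q Rl pI P (⋃ a, F a) = ⋃ a, Tp Q Rl pI P (F a) := by
    intro ι _ F _ hdir
    classical
    apply Set.Subset.antisymm
    · rintro φ ⟨C, hC, hic⟩
      obtain ⟨p', ts', h1, h2, θ, hn, ds, es, h3, h4, h5, h6, h7, h8, h9⟩ := hic
      choose a ha using fun j => Valid.of_iUnion Rl.dc pI F _ (h7 j)
      have hdir' : Directed (· ≤ ·) F := hdir
      obtain ⟨z, hz⟩ := hdir'.finset_le (Finset.univ.image a)
      refine Set.mem_iUnion.2 ⟨z, C, hC, p', ts', h1, h2, θ, hn, ds, es, h3, h4, h5, h6,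
        fun j => Valid.mono _ _ (hz (a j) (Finset.mem_image_of_mem a (Finset.mem_univ j))) _
          (ha j), h8, h9⟩
    · refine Set.iUnion_subset fun a φ hφ => ?_
      obtain ⟨C, hC, hic⟩ := hφ
      exact ⟨C, hC, ImmCons.mono Q Rl pI (Set.subset_iUnion F a) C φ hic⟩
  exact ⟨key, fun F hF hmon => key ℕ F hF hmon.directed_le⟩

end Theorems
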